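/- arXiv:2004.10946 — 8 statements merged into one kernel-verified Lean document; each statement's English description precedes it below -/
import Mathlib

section
/- For every point y in the Euclidean plane, ŝ(y) ≥ √(d² + ‖y − w‖²); that is, the relay selection function at y is bounded below by the hypotenuse determined by the half source–destination distance d and the distance from y to the midpoint w. -/
open Real

/-- For every point `y` in the Euclidean plane, the relay selection function
`ŝ(y) = max (‖xs - y‖) (‖y - xd‖)` is bounded below by `√(d² + ‖y − w‖²)`, where `w` is the
midpoint of source and destination and `d` the half source–destination distance. -/
theorem relay_selection_hypotenuse_lower_bound (xs xd w : EuclideanSpace ℝ (Fin 2)) (d : ℝ)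
    (hw : w = midpoint ℝ xs xd) (hd : d = ‖xs - w‖) :
    ∀ y : EuclideanSpace ℝ (Fin 2),
      Real.sqrt (d ^ 2 + ‖y - w‖ ^ 2) ≤ max ‖xs - y‖ ‖y - xd‖ := by
  intro y
  set M := max ‖xs - y‖ ‖y - xd‖ with hM
  have hM0 : (0:ℝ) ≤ M := le_trans (norm_nonneg _) (le_max_left _ _)
  have hpar := parallelogram_law_with_norm ℝ (xs - y) (y - xd)
  have h1 : xs - y + (y - xd) = (2:ℝ) • (xs - w) := by
    rw [hw, midpoint_eq_smul_add, invOf_eq_inv]; module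
  have h2 : (xs - y) - (y - xd) = (2:ℝ) • (w - y) := by
    rw [hw, midpoint_eq_smul_add, invOf_eq_inv]; module
  rw [h1, h2, norm_smul, norm_smul] at hpar
  have hn1 : ‖xs - w‖ = d := hd.symm
  have hn2 : ‖w - y‖ = ‖y - w‖ := norm_sub_rev _ _
  simp only [hn1, hn2, Real.norm_ofNat] at hpar
  have ha : ‖xs - y‖ ≤ M := le_max_left _ _
  have hb : ‖y - xd‖ ≤ M := le_max_right _ _
  have hkey : d ^ 2 + ‖y - w‖ ^ 2 ≤ M ^ 2 := by
    nlinarith [norm_nonneg (xs - y), norm_nonneg (y - xd)]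
  calc Real.sqrt (d ^ 2 + ‖y - w‖ ^ 2) ≤ Real.sqrt (M ^ 2) := Real.sqrt_le_sqrt hkey
    _ = M := by rw [Real.sqrt_sq hM0]
end

section
/- Let y ∈ ℝ² be arbitrary and let x ∈ ℝ² be any point satisfying both ‖x_s − x‖ = ‖x − x_d‖ (x lies on the equidistant hyperplane between x_s and x_d) and ‖x − w‖ = ‖y − w‖ (x lies on the circle around w of radius ‖y − w‖). Then ŝ(x) = √(d² + ‖y − w‖²) and ŝ(x) ≤ ŝ(y). -/
open Real
open scoped RealInnerProductSpace

/-- Distance balancing property: if `x` lies on the equidistant hyperplane between `xs` and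
`xd` (i.e. `‖xs − x‖ = ‖x − xd‖`) and on the circle around the midpoint `w` of radius
`‖y − w‖`, then `ŝ(x) = √(d² + ‖y − w‖²)` and `ŝ(x) ≤ ŝ(y)`, where
`ŝ(x) = max ‖xs − x‖ ‖x − xd‖`. -/
theorem distance_balancing_property (xs xd w : EuclideanSpace ℝ (Fin 2)) (d : ℝ)
    (hw : w = midpoint ℝ xs xd) (hd : d = ‖xs - w‖)
    (y x : EuclideanSpace ℝ (Fin 2))
    (hbal : ‖xs - x‖ = ‖x - xd‖) (hcirc : ‖x - w‖ = ‖y - w‖) :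
    max ‖xs - x‖ ‖x - xd‖ = Real.sqrt (d ^ 2 + ‖y - w‖ ^ 2) ∧
      max ‖xs - x‖ ‖x - xd‖ ≤ max ‖xs - y‖ ‖y - xd‖ := by
  set a := xs - w with ha
  set b := x - w with hb
  set c := y - w with hc
  have hxd : xd - w = -a := by
    rw [ha, hw, midpoint]
    simp [AffineMap.lineMap_apply]
    module
  have e1 : xs - x = a - b := by rw [ha, hb]; abel
  have e2 : x - xd = b + a := by
    have : x - xd = (x - w) - (xd - w) := by abel
    rw [this, hxd, hb]; abel
  have hip : ⟪a, b⟫ = 0 := by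
    have h1 : ‖a - b‖ ^ 2 = ‖a‖ ^ 2 - 2 * ⟪a, b⟫ + ‖b‖ ^ 2 :=
      norm_sub_sq_real a b
    have h2 : ‖b + a‖ ^ 2 = ‖b‖ ^ 2 + 2 * ⟪b, a⟫ + ‖a‖ ^ 2 :=
      norm_add_sq_real b a
    have hb2 : ‖a - b‖ = ‖b + a‖ := by rw [← e1, ← e2]; exact hbal
    have hcomm : ⟪b, a⟫ = ⟪a, b⟫ := real_inner_comm a b
    rw [hb2, h2, hcomm] at h1
    linarith
  have hsq : ‖xs - x‖ ^ 2 = d ^ 2 + ‖y - w‖ ^ 2 := by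
    have h1 : ‖a - b‖ ^ 2 = ‖a‖ ^ 2 - 2 * ⟪a, b⟫ + ‖b‖ ^ 2 :=
      norm_sub_sq_real a b
    rw [e1, h1, hip, hd, hb, hcirc]
    ring
  have hmaxx : max ‖xs - x‖ ‖x - xd‖ = ‖xs - x‖ := by rw [hbal, max_self, ← hbal]
  have hfirst : max ‖xs - x‖ ‖x - xd‖ = Real.sqrt (d ^ 2 + ‖y - w‖ ^ 2) := by
    rw [hmaxx, ← hsq, Real.sqrt_sq (norm_nonneg _)]
  refine ⟨hfirst, ?_⟩
  have epar : ‖xs - y‖ ^ 2 + ‖y - xd‖ ^ 2 = 2 * (d ^ 2 + ‖y - w‖ ^ 2) := by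
    have e3 : xs - y = a - c := by rw [ha, hc]; abel
    have e4 : y - xd = c + a := by
      have : y - xd = (y - w) - (xd - w) := by abel
      rw [this, hxd, hc]; abel
    have h1 : ‖a - c‖ ^ 2 = ‖a‖ ^ 2 - 2 * ⟪a, c⟫ + ‖c‖ ^ 2 :=
      norm_sub_sq_real a c
    have h2 : ‖c + a‖ ^ 2 = ‖c‖ ^ 2 + 2 * ⟪c, a⟫ + ‖a‖ ^ 2 :=
      norm_add_sq_real c a
    have hcomm : ⟪c, a⟫ = ⟪a, c⟫ := real_inner_comm a c
    rw [e3, e4, h1, h2, hcomm, hd]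
    ring
  rw [hmaxx]
  set M := max ‖xs - y‖ ‖y - xd‖ with hM
  have hM0 : 0 ≤ M := le_trans (norm_nonneg _) (le_max_left _ _)
  have hM1 : ‖xs - y‖ ≤ M := le_max_left _ _
  have hM2 : ‖y - xd‖ ≤ M := le_max_right _ _
  nlinarith [norm_nonneg (xs - x), norm_nonneg (xs - y), norm_nonneg (y - xd), hsq]
end

section
/- Let φ be a finite set of points in ℝ² with at least two elements, let x_mid ∈ φ be a point minimizing the distance ‖x − w‖ over x ∈ φ, and let x₂ ∈ φ \ {x_mid} be a point minimizing ‖x − w‖ over φ \ {x_mid} (the second closest relay to the midpoint). If ŝ(x_mid) ≤ √(d² + ‖x₂ − w‖²), then ŝ(x_mid) = min_{x ∈ φ} ŝ(x); that is, the relay closest to the midpoint solves the optimum relay selection problem on φ. -/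
open Real
open scoped Classical

lemma key_lb (xs xd w : EuclideanSpace ℝ (Fin 2)) (d : ℝ)
    (hw : w = midpoint ℝ xs xd) (hd : d = ‖xs - w‖)
    (x : EuclideanSpace ℝ (Fin 2)) :
    Real.sqrt (d ^ 2 + ‖x - w‖ ^ 2) ≤ max ‖xs - x‖ ‖x - xd‖ := by
  have hsum : ‖xs - x‖ ^ 2 + ‖x - xd‖ ^ 2 = 2 * d ^ 2 + 2 * ‖x - w‖ ^ 2 := by
    have hpar := parallelogram_law_with_norm ℝ (xs - x) (x - xd)
    have h1 : (xs - x) + (x - xd) = xs - xd := by abel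
    have hw' : w = (2⁻¹:ℝ) • (xs + xd) := by
      rw [hw, midpoint_eq_smul_add, invOf_eq_inv]
    have h2 : (xs - x) - (x - xd) = (2:ℝ) • (w - x) := by
      rw [hw']; module
    have h3 : ‖xs - xd‖ = 2 * d := by
      have : xs - w = (2⁻¹:ℝ) • (xs - xd) := by
        rw [hw']; module
      rw [hd, this, norm_smul]
      simp
    rw [h1, h2, h3, norm_smul] at hpar
    have h4 : ‖w - x‖ = ‖x - w‖ := norm_sub_rev _ _
    rw [h4] at hpar
    simp only [Real.norm_ofNat] at hpar
    nlinarith [hpar]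
  have hmaxnn : (0:ℝ) ≤ max ‖xs - x‖ ‖x - xd‖ := le_max_of_le_left (norm_nonneg _)
  have h5 : d ^ 2 + ‖x - w‖ ^ 2 ≤ (max ‖xs - x‖ ‖x - xd‖) ^ 2 := by
    have ha := le_max_left ‖xs - x‖ ‖x - xd‖
    have hb := le_max_right ‖xs - x‖ ‖x - xd‖
    nlinarith [norm_nonneg (xs - x), norm_nonneg (x - xd)]
  calc Real.sqrt (d ^ 2 + ‖x - w‖ ^ 2) ≤ Real.sqrt ((max ‖xs - x‖ ‖x - xd‖) ^ 2) :=
        Real.sqrt_le_sqrt h5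
    _ = max ‖xs - x‖ ‖x - xd‖ := Real.sqrt_sq hmaxnn

/-- Sufficient condition for the optimality of mid-point relay selection: if `φ` is a finite
set of relays with at least two elements, `xmid` is a relay of `φ` closest to the midpoint
`w`, `x₂` is a second closest relay (closest in `φ \ {xmid}`), and
`ŝ(xmid) ≤ √(d² + ‖x₂ − w‖²)`, then `ŝ(xmid) = min_{x ∈ φ} ŝ(x)`, where
`ŝ(x) = max ‖xs − x‖ ‖x − xd‖`. -/
theorem midpoint_selection_optimality (xs xd w : EuclideanSpace ℝ (Fin 2)) (d : ℝ)
    (hw : w = midpoint ℝ xs xd) (hd : d = ‖xs - w‖)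
    (φ : Finset (EuclideanSpace ℝ (Fin 2))) (hcard : 2 ≤ φ.card) (hne : φ.Nonempty)
    (xmid x₂ : EuclideanSpace ℝ (Fin 2))
    (hmid_mem : xmid ∈ φ) (hmid_min : ∀ x ∈ φ, ‖xmid - w‖ ≤ ‖x - w‖)
    (hx₂_mem : x₂ ∈ φ.erase xmid) (hx₂_min : ∀ x ∈ φ.erase xmid, ‖x₂ - w‖ ≤ ‖x - w‖)
    (hcond : max ‖xs - xmid‖ ‖xmid - xd‖ ≤ Real.sqrt (d ^ 2 + ‖x₂ - w‖ ^ 2)) :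
    max ‖xs - xmid‖ ‖xmid - xd‖ = φ.inf' hne (fun x => max ‖xs - x‖ ‖x - xd‖) := by
  apply le_antisymm
  · apply Finset.le_inf'
    intro x hx
    by_cases hxm : x = xmid
    · subst hxm; rfl
    · have hx' : x ∈ φ.erase xmid := Finset.mem_erase.mpr ⟨hxm, hx⟩
      have h1 : ‖x₂ - w‖ ≤ ‖x - w‖ := hx₂_min x hx'
      calc max ‖xs - xmid‖ ‖xmid - xd‖ ≤ Real.sqrt (d ^ 2 + ‖x₂ - w‖ ^ 2) := hcond
        _ ≤ Real.sqrt (d ^ 2 + ‖x - w‖ ^ 2) := by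
            apply Real.sqrt_le_sqrt
            have := sq_le_sq' (by linarith [norm_nonneg (x₂ - w), norm_nonneg (x - w)]) h1
            linarith
        _ ≤ max ‖xs - x‖ ‖x - xd‖ := key_lb xs xd w d hw hd x
  · exact Finset.inf'_le _ hmid_mem
end

section
/- For all real λ > 0 and d > 0, the double integral (2/π) · ∫_{θ=0}^{π/2} ∫_{ψ=0}^{∞} e^{−2λπ d ψ cos θ} · 2λπψ · e^{−λπψ²} dψ dθ equals e^{λπd²} · (2/√π) · ∫_{√(λπ)·d}^{∞} e^{−u²} du. (This is the closed-form expression e^{λπd²}·erfc(√(λπ)·d) for the probability of the sufficient mid-point optimality condition in a homogeneous Poisson network of intensity λ.) -/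
/-!
With `a = λπ`, the integrand `e^{-2adψ cos θ} · 2aψ e^{-aψ²}` equals `2a e^{ad²}` times
`ψ · G(ψ cos θ, ψ sin θ)`, the polar form of the Gaussian `G(x, y) = e^{-a((x + d)² + y²)}`
centred at `(-d, 0)`; as `θ` runs over `(0, π/2)` this covers the open first quadrant. In
Cartesian coordinates the quadrant integral of `G` factors as
`∫₀^∞ e^{-a(x + d)²} dx · ∫₀^∞ e^{-ay²} dy`, a rescaled erfc tail times half a Gaussian integral.
-/

open Real MeasureTheory Set

section Polar

variable {E : Type*} [NormedAddCommGroup E] [NormedSpace ℝ E]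

theorem integrableOn_target_comp_polarCoord_symm {f : ℝ × ℝ → E} (hf : Integrable f) :
    IntegrableOn (fun p => p.1 • f (polarCoord.symm p)) polarCoord.target := by
  have hsource : IntegrableOn f (polarCoord.symm '' polarCoord.target) := by
    rw [polarCoord.symm_image_target_eq_source]
    exact hf.integrableOn
  refine ((integrableOn_image_iff_integrableOn_abs_det_fderiv_smul volume
    polarCoord.open_target.measurableSet
    (fun p _ => (hasFDerivAt_polarCoord_symm p).hasFDerivWithinAt) polarCoord.symm.injOn f).1
    hsource).congr_fun (fun p hp => ?_) polarCoord.open_target.measurableSet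
  simp only [det_fderivPolarCoordSymm, abs_of_pos (show 0 < p.1 from hp.1)]

theorem polarCoord_symm_mem_Ioi_prod_Ioi_iff {p : ℝ × ℝ} (hp : p ∈ polarCoord.target) :
    polarCoord.symm p ∈ Ioi 0 ×ˢ Ioi 0 ↔ p.2 ∈ Ioo 0 (π / 2) := by
  obtain ⟨r, θ⟩ := p
  obtain ⟨hr, hθ⟩ : 0 < r ∧ θ ∈ Ioo (-π) π := by simpa [polarCoord_target] using hp
  simp only [polarCoord_symm_apply, mem_prod, mem_Ioi, mul_pos_iff_of_pos_left hr]
  constructor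
  · rintro ⟨hcos, hsin⟩
    refine ⟨?_, ?_⟩
    · by_contra! h
      exact (sin_nonpos_of_nonpos_of_neg_pi_le h hθ.1.le).not_gt hsin
    · by_contra! h
      exact (cos_nonpos_of_pi_div_two_le_of_le h (by linarith [hθ.2])).not_gt hcos
  · rintro ⟨h0, hπ2⟩
    exact ⟨cos_pos_of_mem_Ioo ⟨by linarith, hπ2⟩, sin_pos_of_pos_of_lt_pi h0 (by linarith)⟩

theorem integral_Ioi_prod_Ioi_eq_integral_polar {f : ℝ × ℝ → E}
    (hf : IntegrableOn f (Ioi 0 ×ˢ Ioi 0)) :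
    ∫ q in Ioi 0 ×ˢ Ioi 0, f q =
      ∫ θ in Ioo 0 (π / 2), ∫ r in Ioi 0, r • f (r * cos θ, r * sin θ) := by
  have hQ : MeasurableSet (Ioi (0 : ℝ) ×ˢ Ioi (0 : ℝ)) := measurableSet_Ioi.prod measurableSet_Ioi
  have hT : MeasurableSet (Ioi (0 : ℝ) ×ˢ Ioo 0 (π / 2)) := measurableSet_Ioi.prod measurableSet_Ioo
  have hTtarget : Ioi 0 ×ˢ Ioo 0 (π / 2) ⊆ polarCoord.target := fun p hp => by
    rw [polarCoord_target]
    exact ⟨hp.1, by linarith [hp.2.1, pi_pos], by linarith [hp.2.2, pi_pos]⟩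
  have hind : EqOn (fun p : ℝ × ℝ => p.1 • (Ioi 0 ×ˢ Ioi 0).indicator f (polarCoord.symm p))
      ((Ioi 0 ×ˢ Ioo 0 (π / 2)).indicator fun p => p.1 • f (polarCoord.symm p))
      polarCoord.target := fun p hp => by
    dsimp only
    by_cases hθ : p.2 ∈ Ioo 0 (π / 2)
    · rw [indicator_of_mem ((polarCoord_symm_mem_Ioi_prod_Ioi_iff hp).2 hθ),
        indicator_of_mem (show p ∈ Ioi 0 ×ˢ Ioo 0 (π / 2) from ⟨hp.1, hθ⟩)]
    · rw [indicator_of_notMem (mt (polarCoord_symm_mem_Ioi_prod_Ioi_iff hp).1 hθ),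
        indicator_of_notMem (show p ∉ Ioi 0 ×ˢ Ioo 0 (π / 2) from fun h => hθ h.2), smul_zero]
  have hint : IntegrableOn (fun p : ℝ × ℝ => p.1 • f (polarCoord.symm p))
      (Ioi 0 ×ˢ Ioo 0 (π / 2)) :=
    ((integrableOn_target_comp_polarCoord_symm ((integrable_indicator_iff hQ).2 hf)).mono_set
      hTtarget).congr_fun (fun p hp => (hind (hTtarget hp)).trans (indicator_of_mem hp _)) hT
  rw [IntegrableOn, Measure.volume_eq_prod, ← Measure.prod_restrict] at hint
  calc ∫ q in Ioi 0 ×ˢ Ioi 0, f q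
      = ∫ p in polarCoord.target, p.1 • (Ioi 0 ×ˢ Ioi 0).indicator f (polarCoord.symm p) := by
        rw [integral_comp_polarCoord_symm, integral_indicator hQ]
    _ = ∫ p in Ioi 0 ×ˢ Ioo 0 (π / 2), p.1 • f (polarCoord.symm p) := by
        rw [setIntegral_congr_fun polarCoord.open_target.measurableSet hind,
          setIntegral_indicator hT, inter_eq_right.2 hTtarget]
    _ = _ := by
        rw [Measure.volume_eq_prod, ← Measure.prod_restrict]
        exact integral_prod_symm _ hint

end Polar

theorem setIntegral_Ioi_comp_add_right {E : Type*} [NormedAddCommGroup E] [NormedSpace ℝ E]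
    (g : ℝ → E) (c d : ℝ) : ∫ x in Ioi c, g (x + d) = ∫ x in Ioi (c + d), g x := by
  have h := (measurableEmbedding_addRight d).setIntegral_map g (Ioi (c + d)) (μ := volume)
  rw [map_add_right_eq_self, preimage_add_const_Ioi, add_sub_cancel_right] at h
  exact h.symm

theorem integral_Ioi_exp_neg_mul_add_sq {a : ℝ} (ha : 0 < a) (d : ℝ) :
    ∫ x in Ioi 0, exp (-(a * (x + d) ^ 2)) = (√a)⁻¹ * ∫ u in Ioi (√a * d), exp (-u ^ 2) := by
  calc ∫ x in Ioi 0, exp (-(a * (x + d) ^ 2)) = ∫ x in Ioi d, exp (-(√a * x) ^ 2) := by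
        rw [setIntegral_Ioi_comp_add_right (fun x => exp (-(a * x ^ 2))) 0 d, zero_add]
        simp_rw [mul_pow, sq_sqrt ha.le]
    _ = _ := integral_comp_mul_left_Ioi (fun u => exp (-u ^ 2)) d (sqrt_pos.2 ha)

theorem integral_Ioi_prod_Ioi_exp_neg_mul_dist_sq {a : ℝ} (ha : 0 < a) (d : ℝ) :
    ∫ q in Ioi 0 ×ˢ Ioi 0, exp (-(a * ((q.1 + d) ^ 2 + q.2 ^ 2))) =
      (√a)⁻¹ * (∫ u in Ioi (√a * d), exp (-u ^ 2)) * (√(π / a) / 2) := by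
  simp_rw [mul_add, neg_add, exp_add]
  rw [Measure.volume_eq_prod, setIntegral_prod_mul (fun x => exp (-(a * (x + d) ^ 2)))
    (fun y => exp (-(a * y ^ 2))), integral_Ioi_exp_neg_mul_add_sq ha, ← integral_gaussian_Ioi a]
  simp only [neg_mul]

theorem integrable_exp_neg_mul_dist_sq {a : ℝ} (ha : 0 < a) (d : ℝ) :
    Integrable fun q : ℝ × ℝ => exp (-(a * ((q.1 + d) ^ 2 + q.2 ^ 2))) := by
  simp_rw [mul_add, neg_add, exp_add]
  rw [Measure.volume_eq_prod]
  exact (((integrable_exp_neg_mul_sq ha).comp_add_right d).mul_prod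
    (integrable_exp_neg_mul_sq ha)).congr (by simp [neg_mul])

theorem integral_Ioo_Ioi_exp_mul_rayleigh {a : ℝ} (ha : 0 < a) (d : ℝ) :
    ∫ θ in Ioo 0 (π / 2), ∫ ψ in Ioi 0,
        exp (-(2 * a * d * ψ * cos θ)) * (2 * a * ψ * exp (-(a * ψ ^ 2))) =
      √π * exp (a * d ^ 2) * ∫ u in Ioi (√a * d), exp (-u ^ 2) := by
  have hpolar : ∀ ψ θ : ℝ, exp (-(2 * a * d * ψ * cos θ)) * (2 * a * ψ * exp (-(a * ψ ^ 2))) =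
      2 * a * exp (a * d ^ 2) * (ψ • exp (-(a * ((ψ * cos θ + d) ^ 2 + (ψ * sin θ) ^ 2)))) := by
    intro ψ θ
    have hexp : exp (-(2 * a * d * ψ * cos θ)) * exp (-(a * ψ ^ 2)) =
        exp (a * d ^ 2) * exp (-(a * ((ψ * cos θ + d) ^ 2 + (ψ * sin θ) ^ 2))) := by
      rw [← exp_add, ← exp_add]
      congr 1
      linear_combination (a * ψ ^ 2) * sin_sq_add_cos_sq θ
    rw [smul_eq_mul]
    linear_combination (2 * a * ψ) * hexp
  simp_rw [hpolar, integral_const_mul]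
  rw [← integral_Ioi_prod_Ioi_eq_integral_polar (integrable_exp_neg_mul_dist_sq ha d).integrableOn,
    integral_Ioi_prod_Ioi_exp_neg_mul_dist_sq ha, sqrt_div' _ ha.le]
  field_simp
  rw [sq_sqrt ha.le]

theorem suff_condition_probability_general (lam d : ℝ) (hlam : 0 < lam) :
    (2 / π) * ∫ θ in (0:ℝ)..(π / 2),
        ∫ ψ in Set.Ioi (0:ℝ),
          Real.exp (-(2 * lam * π * d * ψ * Real.cos θ)) *
            (2 * lam * π * ψ * Real.exp (-(lam * π * ψ ^ 2)))
      = Real.exp (lam * π * d ^ 2) *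
          ((2 / Real.sqrt π) *
            ∫ u in Set.Ioi (Real.sqrt (lam * π) * d), Real.exp (-u ^ 2)) := by
  have h := integral_Ioo_Ioi_exp_mul_rayleigh (mul_pos hlam pi_pos) d
  rw [intervalIntegral.integral_of_le (by positivity), integral_Ioc_eq_integral_Ioo]
  simp only [mul_assoc] at h ⊢
  rw [h]
  have hπ : √π ≠ 0 := (sqrt_pos.2 pi_pos).ne'
  field_simp
  rw [sq_sqrt pi_pos.le]

/-- Closed form for the probability of the sufficient mid-point optimality condition:
for `λ > 0` and `d > 0`,
`(2/π) ∫₀^{π/2} ∫₀^∞ e^{−2λπdψ cos θ} · 2λπψ e^{−λπψ²} dψ dθ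
  = e^{λπd²} · (2/√π) ∫_{√(λπ)d}^∞ e^{−u²} du`,
i.e. `P(E_suff) = e^{λπd²} erfc(√(λπ) d)`. -/
theorem suff_condition_probability (lam d : ℝ) (hlam : 0 < lam) (hd : 0 < d) :
    (2 / π) * ∫ θ in (0:ℝ)..(π / 2),
        ∫ ψ in Set.Ioi (0:ℝ),
          Real.exp (-(2 * lam * π * d * ψ * Real.cos θ)) *
            (2 * lam * π * ψ * Real.exp (-(lam * π * ψ ^ 2)))
      = Real.exp (lam * π * d ^ 2) *
          ((2 / Real.sqrt π) *
            ∫ u in Set.Ioi (Real.sqrt (lam * π) * d), Real.exp (-u ^ 2)) :=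
  suff_condition_probability_general lam d hlam
end

section
/- Let x_s, x_d ∈ ℝ² with ‖x_s − x_d‖ = 2d, d > 0. For every real T with 0 ≤ T < d, the set {x ∈ ℝ² : max(‖x_s − x‖, ‖x − x_d‖) ≤ T} is empty; and for every T > d, its two-dimensional Lebesgue measure equals πT² − 2d√(T² − d²) − 2T²·arctan(d/√(T² − d²)). (This is the area of the lens-shaped intersection of the two discs of radius T centered at x_s and x_d, and equals μ(T)/λ, the normalized mean feedback load of the threshold-T selective feedback policy under a homogeneous Poisson relay process of intensity λ.) -/
/-!
The region is the lens `closedBall xs T ∩ closedBall xd T`. An affine isometry (a reflection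
composed with translations) preserves volume and moves the centres to `(∓d, 0)`. There the vertical
chord of the lens over `x` has length `2√(T² - (|x| + d)²)`, and integrating these chord lengths
with the primitive `(u√(T² - u²) + T² arcsin (u / T)) / 2` of `√(T² - u²)` gives the area; finally
`arcsin (d / T) = arctan (d / √(T² - d²))`.
-/

open Real MeasureTheory Metric

lemma hasDerivAt_circularSegment_primitive {T u : ℝ} (h₁ : -T < u) (h₂ : u < T) :
    HasDerivAt (fun u => (u * √(T ^ 2 - u ^ 2) + T ^ 2 * arcsin (u / T)) / 2)
      √(T ^ 2 - u ^ 2) u := by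
  have hT : 0 < T := by linarith
  have hpos : 0 < T ^ 2 - u ^ 2 := by nlinarith
  have hsqrt : HasDerivAt (fun u => √(T ^ 2 - u ^ 2)) (-u / √(T ^ 2 - u ^ 2)) u := by
    refine (((hasDerivAt_pow 2 u).const_sub (T ^ 2)).sqrt hpos.ne').congr_deriv ?_
    field_simp
    ring
  have harcsin : HasDerivAt (fun u => arcsin (u / T)) (1 / √(T ^ 2 - u ^ 2)) u := by
    have h1 : -1 < u / T := by rw [lt_div_iff₀ hT]; linarith
    have h2 : u / T < 1 := by rw [div_lt_one hT]; exact h₂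
    refine ((hasDerivAt_arcsin h1.ne' h2.ne).comp u ((hasDerivAt_id u).div_const T)).congr_deriv ?_
    rw [show 1 - (u / T) ^ 2 = (T ^ 2 - u ^ 2) / T ^ 2 by field_simp, sqrt_div' _ (sq_nonneg T),
      sqrt_sq hT.le]
    field_simp
  refine ((((hasDerivAt_id u).mul hsqrt).add (harcsin.const_mul (T ^ 2))).div_const 2).congr_deriv
    ?_
  have := sq_sqrt hpos.le
  simp only [id]
  field_simp
  linear_combination -this

lemma integral_sqrt_sq_sub_sq {T a : ℝ} (hT : 0 < T) (ha : -T ≤ a) (haT : a ≤ T) :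
    ∫ u in a..T, √(T ^ 2 - u ^ 2)
      = π * T ^ 2 / 4 - (a * √(T ^ 2 - a ^ 2) + T ^ 2 * arcsin (a / T)) / 2 := by
  have hcont : Continuous fun u : ℝ => √(T ^ 2 - u ^ 2) := by fun_prop
  rw [intervalIntegral.integral_eq_sub_of_hasDerivAt_of_le haT (by fun_prop)
    (fun u hu => hasDerivAt_circularSegment_primitive (ha.trans_lt hu.1) hu.2)
    (hcont.intervalIntegrable a T)]
  simp [div_self hT.ne']
  ring

lemma arcsin_div_eq_arctan_div_sqrt {d T : ℝ} (h : |d| < T) :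
    arcsin (d / T) = arctan (d / √(T ^ 2 - d ^ 2)) := by
  have hT : 0 < T := (abs_nonneg d).trans_lt h
  have hmem : d / T ∈ Set.Ioo (-1 : ℝ) 1 := by
    rw [Set.mem_Ioo, lt_div_iff₀ hT, div_lt_one hT]
    constructor <;> linarith [abs_lt.mp h]
  rw [arcsin_eq_arctan hmem, show 1 - (d / T) ^ 2 = (T ^ 2 - d ^ 2) / T ^ 2 by field_simp,
    sqrt_div' _ (sq_nonneg T), sqrt_sq hT.le, div_div_div_cancel_right₀ hT.ne']

lemma volume_setOf_sq_le (M : ℝ) : volume {y : ℝ | y ^ 2 ≤ M} = ENNReal.ofReal (2 * √M) := by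
  rcases le_or_gt 0 M with hM | hM
  · have : {y : ℝ | y ^ 2 ≤ M} = Set.Icc (-√M) √M := by ext y; exact Real.sq_le hM
    rw [this, Real.volume_Icc]
    ring_nf
  · have : {y : ℝ | y ^ 2 ≤ M} = ∅ := Set.eq_empty_of_forall_notMem fun y hy =>
      (hM.trans_le (sq_nonneg y)).not_ge hy
    simp [this, sqrt_eq_zero_of_nonpos hM.le]

lemma integral_lens_chord {d T : ℝ} (hd : 0 ≤ d) (hdT : d < T) :
    ∫ x, 2 * √(T ^ 2 - (|x| + d) ^ 2)
      = π * T ^ 2 - 2 * d * √(T ^ 2 - d ^ 2) - 2 * T ^ 2 * arcsin (d / T) := by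
  have hT : 0 < T := hd.trans_lt hdT
  -- `√` of a negative number is `0`, so the chord length vanishes beyond `|x| = T - d`.
  have hvanish : ∀ x ∈ Set.Ioi (0 : ℝ) \ Set.Ioc 0 (T - d), 2 * √(T ^ 2 - (x + d) ^ 2) = 0 := by
    rintro x ⟨hx : 0 < x, hxT⟩
    have : T - d < x := by simpa [hx] using hxT
    rw [sqrt_eq_zero_of_nonpos (by nlinarith), mul_zero]
  rw [integral_comp_abs (f := fun x => 2 * √(T ^ 2 - (x + d) ^ 2)),
    setIntegral_eq_of_subset_of_forall_sdiff_eq_zero measurableSet_Ioi Set.Ioc_subset_Ioi_self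
      hvanish, ← intervalIntegral.integral_of_le (by linarith),
    intervalIntegral.integral_comp_add_right (fun u => 2 * √(T ^ 2 - u ^ 2)),
    intervalIntegral.integral_const_mul, zero_add, sub_add_cancel,
    integral_sqrt_sq_sub_sq hT (by linarith) hdT.le]
  ring

lemma volume_lens_prod {d T : ℝ} (hd : 0 ≤ d) (hdT : d < T) :
    volume {p : ℝ × ℝ | (|p.1| + d) ^ 2 + p.2 ^ 2 ≤ T ^ 2}
      = ENNReal.ofReal (π * T ^ 2 - 2 * d * √(T ^ 2 - d ^ 2) - 2 * T ^ 2 * arcsin (d / T)) := by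
  have hclosed : IsClosed {p : ℝ × ℝ | (|p.1| + d) ^ 2 + p.2 ^ 2 ≤ T ^ 2} :=
    isClosed_le (by fun_prop) continuous_const
  have hslice (x : ℝ) : Prod.mk x ⁻¹' {p : ℝ × ℝ | (|p.1| + d) ^ 2 + p.2 ^ 2 ≤ T ^ 2}
      = {y : ℝ | y ^ 2 ≤ T ^ 2 - (|x| + d) ^ 2} := by
    ext y
    simp only [Set.mem_preimage, Set.mem_ofPred_eq]
    constructor <;> intro h <;> linarith
  have hint : Integrable fun x : ℝ => 2 * √(T ^ 2 - (|x| + d) ^ 2) := by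
    refine Continuous.integrable_of_hasCompactSupport (by fun_prop) ?_
    refine HasCompactSupport.intro (isCompact_Icc (a := -T) (b := T)) fun x hx => ?_
    have : T < |x| := not_le.mp fun h => hx (abs_le.mp h)
    rw [sqrt_eq_zero_of_nonpos (by nlinarith [abs_nonneg x]), mul_zero]
  rw [Measure.volume_eq_prod, Measure.prod_apply hclosed.measurableSet]
  simp_rw [hslice, volume_setOf_sq_le]
  rw [← ofReal_integral_eq_lintegral_ofReal hint (.of_forall fun x => by positivity),
    integral_lens_chord hd hdT]

section Isometry

variable {E : Type*} [NormedAddCommGroup E] [InnerProductSpace ℝ E] [FiniteDimensional ℝ E]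
  [MeasurableSpace E] [BorelSpace E]

lemma volume_closedBall_inter_closedBall_congr {a b a' b' : E} (h : dist a b = dist a' b')
    (r s : ℝ) :
    volume (closedBall a r ∩ closedBall b s) = volume (closedBall a' r ∩ closedBall b' s) := by
  have hnorm : ‖b - a‖ = ‖b' - a'‖ := by rw [← dist_eq_norm', ← dist_eq_norm', h]
  set R : E ≃ₗᵢ[ℝ] E := Submodule.reflection (ℝ ∙ (b - a - (b' - a')))ᗮ
  have hR : R (b - a) = b' - a' := Submodule.reflection_sub hnorm
  have hmp : MeasurePreserving (fun x => R (x - a) + a') volume volume :=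
    (measurePreserving_add_right _ a').comp
      (R.measurePreserving.comp (measurePreserving_sub_right _ a))
  have hpre : (fun x => R (x - a) + a') ⁻¹' (closedBall a' r ∩ closedBall b' s)
      = closedBall a r ∩ closedBall b s := by
    ext x
    simp only [Set.mem_preimage, Set.mem_inter_iff, mem_closedBall, dist_eq_norm]
    rw [add_sub_cancel_right, show R (x - a) + a' - b' = R (x - b) by
      rw [← sub_sub_sub_cancel_right x b a, map_sub R (x - a), hR]; abel, R.norm_map, R.norm_map]
  rw [← hpre,
    hmp.measure_preimage (isClosed_closedBall.inter isClosed_closedBall).nullMeasurableSet]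

end Isometry

lemma volume_closedBall_inter_closedBall_fin_two {d T : ℝ} (hd : 0 ≤ d) (hdT : d < T) :
    volume (closedBall !₂[-d, 0] T ∩ closedBall !₂[d, 0] T : Set (EuclideanSpace ℝ (Fin 2)))
      = ENNReal.ofReal (π * T ^ 2 - 2 * d * √(T ^ 2 - d ^ 2) - 2 * T ^ 2 * arcsin (d / T)) := by
  have hmp : MeasurePreserving (MeasurableEquiv.finTwoArrow ∘ WithLp.ofLp
      (V := Fin 2 → ℝ)) volume volume :=
    (volume_preserving_finTwoArrow ℝ).comp (PiLp.volume_preserving_ofLp (Fin 2))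
  have hlens (u v : ℝ) :
      (u + d) ^ 2 + v ^ 2 ≤ T ^ 2 ∧ (u - d) ^ 2 + v ^ 2 ≤ T ^ 2 ↔
        (|u| + d) ^ 2 + v ^ 2 ≤ T ^ 2 := by
    rcases abs_cases u with ⟨hu, hu0⟩ | ⟨hu, hu0⟩ <;> rw [hu] <;>
      refine ⟨fun h => by linarith [h.1, h.2], fun h => ⟨by nlinarith, by nlinarith⟩⟩
  have hset : (closedBall !₂[-d, 0] T ∩ closedBall !₂[d, 0] T : Set (EuclideanSpace ℝ (Fin 2)))
      = (MeasurableEquiv.finTwoArrow ∘ WithLp.ofLp) ⁻¹'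
        {p : ℝ × ℝ | (|p.1| + d) ^ 2 + p.2 ^ 2 ≤ T ^ 2} := by
    ext x
    simp only [Set.mem_inter_iff, mem_closedBall, EuclideanSpace.dist_eq, Fin.sum_univ_two,
      sqrt_le_left (hd.trans hdT.le), Real.dist_eq, sq_abs]
    simpa using hlens (x 0) (x 1)
  rw [hset, hmp.measure_preimage (isClosed_le (by fun_prop) continuous_const).nullMeasurableSet,
    volume_lens_prod hd hdT]

/-- Feedback region of the threshold-`T` selective feedback policy: with
`‖xs − xd‖ = 2d`, `d > 0`, the set `{x : max ‖xs − x‖ ‖x − xd‖ ≤ T}` is empty for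
`0 ≤ T < d`, and for `T > d` its two-dimensional Lebesgue measure (the lens-shaped
intersection of the two radius-`T` discs) equals
`πT² − 2d√(T² − d²) − 2T² arctan (d / √(T² − d²))`. -/
theorem feedback_region_measure (xs xd : EuclideanSpace ℝ (Fin 2)) (d : ℝ)
    (hd : 0 < d) (hdist : ‖xs - xd‖ = 2 * d) :
    (∀ T : ℝ, 0 ≤ T → T < d →
      {x : EuclideanSpace ℝ (Fin 2) | max ‖xs - x‖ ‖x - xd‖ ≤ T} = ∅) ∧
    (∀ T : ℝ, d < T →
      volume {x : EuclideanSpace ℝ (Fin 2) | max ‖xs - x‖ ‖x - xd‖ ≤ T}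
        = ENNReal.ofReal (π * T ^ 2 - 2 * d * Real.sqrt (T ^ 2 - d ^ 2)
            - 2 * T ^ 2 * Real.arctan (d / Real.sqrt (T ^ 2 - d ^ 2)))) := by
  refine ⟨fun T _ hTd => ?_, fun T hdT => ?_⟩
  · refine Set.eq_empty_of_forall_notMem fun x (hx : max _ _ ≤ T) => ?_
    have htri : ‖xs - xd‖ ≤ ‖xs - x‖ + ‖x - xd‖ := norm_sub_le_norm_sub_add_norm_sub xs x xd
    linarith [max_le_iff.mp hx]
  · have hregion : {x : EuclideanSpace ℝ (Fin 2) | max ‖xs - x‖ ‖x - xd‖ ≤ T}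
        = closedBall xs T ∩ closedBall xd T := by
      ext x
      simp [dist_eq_norm, norm_sub_rev xs x]
    have hcentres : dist xs xd = dist !₂[-d, 0] !₂[d, 0] := by
      rw [dist_eq_norm, hdist, EuclideanSpace.dist_eq]
      simp only [Fin.sum_univ_two, Real.dist_eq, sq_abs, Matrix.cons_val_zero, Matrix.cons_val_one]
      rw [show (-d - d) ^ 2 + (0 - 0) ^ 2 = (2 * d) ^ 2 by ring, sqrt_sq (by positivity)]
    rw [hregion, volume_closedBall_inter_closedBall_congr hcentres,
      volume_closedBall_inter_closedBall_fin_two hd.le hdT,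
      arcsin_div_eq_arctan_div_sqrt (by rwa [abs_of_pos hd])]
end

section
/- Fix λ > 0 and d > 0 and define f(γ) = 4λγ·arccos(d/γ)·exp(−2λd²·((γ/d)²·arccos(d/γ) − √((γ/d)² − 1))) for γ ≥ d (the density of the optimum channel quality indicator). Then lim_{γ → ∞} (−log f(γ))/γ² = πλ; that is, the tail of f decays like a Gaussian with rate πλ. -/
/-!
Taking logarithms, `-log f(γ) = 2λd² h(γ/d) - log (4λγ arccos (d/γ))`, where
`h(y) = y² arccos (1/y) - √(y² - 1)`. The prefactor only contributes `O(log γ)`, while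
`h(y) / y² → arccos 0 = π/2` because `√(y² - 1) ≤ y`; hence `-log f(γ) / γ² → 2λ · π/2`.
-/

open Real Filter Topology

lemma tendsto_arccos_inv_atTop : Tendsto (fun y : ℝ => arccos y⁻¹) atTop (𝓝 (π / 2)) := by
  simpa [arccos_zero, Function.comp_def] using
    (continuous_arccos.tendsto 0).comp tendsto_inv_atTop_zero

lemma tendsto_sqrt_sq_sub_one_div_sq_atTop :
    Tendsto (fun y : ℝ => √(y ^ 2 - 1) / y ^ 2) atTop (𝓝 0) := by
  refine tendsto_of_tendsto_of_tendsto_of_le_of_le' tendsto_const_nhds tendsto_inv_atTop_zero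
    (Eventually.of_forall fun y => by positivity) ?_
  filter_upwards [eventually_gt_atTop 0] with y hy
  calc √(y ^ 2 - 1) / y ^ 2 ≤ √(y ^ 2) / y ^ 2 := by gcongr; linarith
    _ = y⁻¹ := by rw [sqrt_sq hy.le]; field_simp

/-- `y² arccos (1/y) - √(y² - 1)` is half the area of the lens in which two discs of radius `y`
with centres at distance `2` overlap. -/
lemma tendsto_lens_div_sq_atTop :
    Tendsto (fun y : ℝ => (y ^ 2 * arccos y⁻¹ - √(y ^ 2 - 1)) / y ^ 2) atTop (𝓝 (π / 2)) := by
  have h := tendsto_arccos_inv_atTop.sub tendsto_sqrt_sq_sub_one_div_sq_atTop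
  rw [sub_zero] at h
  refine h.congr' ?_
  filter_upwards [eventually_ne_atTop 0] with y hy
  field_simp

lemma tendsto_log_div_sq_atTop : Tendsto (fun γ : ℝ => log γ / γ ^ 2) atTop (𝓝 0) := by
  have h := isLittleO_log_id_atTop.tendsto_div_nhds_zero.mul tendsto_inv_atTop_zero
  rw [mul_zero] at h
  refine h.congr fun γ => ?_
  simp only [id_eq]
  ring

lemma tendsto_log_mul_div_sq_atTop {q : ℝ → ℝ} {c : ℝ} (hq : Tendsto q atTop (𝓝 c))
    (hc : 0 < c) : Tendsto (fun γ => log (γ * q γ) / γ ^ 2) atTop (𝓝 0) := by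
  have hlog_q : Tendsto (fun γ => log (q γ) / γ ^ 2) atTop (𝓝 0) :=
    ((continuousAt_log hc.ne').tendsto.comp hq).div_atTop (tendsto_pow_atTop two_ne_zero)
  have h := tendsto_log_div_sq_atTop.add hlog_q
  rw [add_zero] at h
  refine h.congr' ?_
  filter_upwards [eventually_gt_atTop 0, hq.eventually (lt_mem_nhds hc)] with γ hγ hqγ
  rw [log_mul hγ.ne' hqγ.ne', add_div]

lemma tendsto_neg_log_mul_exp_neg_div_sq {p E : ℝ → ℝ} {L : ℝ}
    (hp_ne : ∀ᶠ γ in atTop, p γ ≠ 0)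
    (hp : Tendsto (fun γ => log (p γ) / γ ^ 2) atTop (𝓝 0))
    (hE : Tendsto (fun γ => E γ / γ ^ 2) atTop (𝓝 L)) :
    Tendsto (fun γ => -log (p γ * exp (-E γ)) / γ ^ 2) atTop (𝓝 L) := by
  have h := hE.sub hp
  rw [sub_zero] at h
  refine h.congr' ?_
  filter_upwards [hp_ne] with γ hγ
  rw [log_mul hγ (exp_ne_zero _), log_exp]
  ring

/-- Gaussian tail of the density of `Γ_opt`: with
`f(γ) = 4λγ arccos (d/γ) exp(−2λd²((γ/d)² arccos (d/γ) − √((γ/d)² − 1)))`,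
one has `(−log f(γ))/γ² → πλ` as `γ → ∞`. -/
theorem gamma_opt_density_tail (lam d : ℝ) (hlam : 0 < lam) (hd : 0 < d) :
    Tendsto (fun γ : ℝ =>
        -Real.log (4 * lam * γ * Real.arccos (d / γ) *
            Real.exp (-(2 * lam * d ^ 2 *
              ((γ / d) ^ 2 * Real.arccos (d / γ) - Real.sqrt ((γ / d) ^ 2 - 1))))) / γ ^ 2)
      atTop (nhds (π * lam)) := by
  have hscale : Tendsto (fun γ => γ / d) atTop atTop := tendsto_id.atTop_div_const hd
  have hprefactor : Tendsto (fun γ => log (4 * lam * γ * arccos (d / γ)) / γ ^ 2) atTop (𝓝 0) := by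
    have h := tendsto_log_mul_div_sq_atTop
      ((tendsto_arccos_inv_atTop.comp hscale).const_mul (4 * lam)) (by positivity)
    refine h.congr fun γ => ?_
    simp only [Function.comp_apply, inv_div]
    ring_nf
  have hexponent : Tendsto (fun γ => 2 * lam * d ^ 2 *
      ((γ / d) ^ 2 * arccos (d / γ) - √((γ / d) ^ 2 - 1)) / γ ^ 2) atTop (𝓝 (π * lam)) := by
    have h := (tendsto_lens_div_sq_atTop.comp hscale).const_mul (2 * lam)
    rw [show 2 * lam * (π / 2) = π * lam by ring] at h
    refine h.congr' ?_
    filter_upwards [eventually_ne_atTop 0] with γ hγ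
    simp only [Function.comp_apply, inv_div]
    field_simp
  refine tendsto_neg_log_mul_exp_neg_div_sq ?_ hprefactor hexponent
  filter_upwards [eventually_gt_atTop d] with γ hγ
  have hγ_pos : 0 < γ := hd.trans hγ
  have harccos : 0 < arccos (d / γ) := arccos_pos.2 ((div_lt_one hγ_pos).2 hγ)
  positivity
end

section
/- Define f(x) = e^x · E₁(x) for x > 0, where E₁(x) = ∫_1^∞ e^{−t x}/t dt is the exponential integral. Then f is strictly decreasing on (0, ∞), f(x) → ∞ as x → 0⁺, and f(x) → 0 as x → ∞. -/
/-!
Absorbing `eˣ` into the integrand writes `eˣ E₁(x) = ∫_{t > 1} e^{-(t-1)x} / t dt`, whose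
integrand decreases strictly in `x`. Bounding `1 / t` by `1` gives
`eˣ E₁(x) ≤ ∫_{t > 1} e^{-(t-1)x} dt = 1 / x`, while on `1 < t ≤ 1 + 1/x` the exponential is at
least `e⁻¹`, so `eˣ E₁(x) ≥ e⁻¹ log (1 + 1/x)`, which blows up as `x → 0⁺`.
-/

open Real Filter MeasureTheory Set

section

variable {X : Type*} [MeasurableSpace X] {μ : Measure X} {s : Set X} {f g : X → ℝ}

theorem setIntegral_lt_setIntegral_of_forall_lt (hs : MeasurableSet s) (hμs : μ s ≠ 0)
    (hf : IntegrableOn f s μ) (hg : IntegrableOn g s μ) (hlt : ∀ x ∈ s, f x < g x) :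
    ∫ x in s, f x ∂μ < ∫ x in s, g x ∂μ := by
  rw [← sub_pos, ← integral_sub hg hf,
    setIntegral_pos_iff_support_of_nonneg_ae (f := fun x => g x - f x) _ (hg.sub hf),
    inter_eq_self_of_subset_right fun x hx => Function.mem_support.2 (sub_pos.2 (hlt x hx)).ne',
    pos_iff_ne_zero]
  · exact hμs
  · filter_upwards [ae_restrict_mem hs] with x hx using sub_nonneg.2 (hlt x hx).le

end

noncomputable def expMulE1 (x : ℝ) : ℝ := ∫ t in Ioi (1 : ℝ), exp (-((t - 1) * x)) / t

theorem exp_mul_integral_eq_expMulE1 (x : ℝ) :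
    exp x * ∫ t in Ioi (1 : ℝ), exp (-(t * x)) / t = expMulE1 x := by
  rw [expMulE1, ← integral_const_mul]
  congr 1 with t
  rw [mul_div_assoc', ← exp_add]
  ring_nf

theorem exp_neg_sub_one_mul (x t : ℝ) : exp (-((t - 1) * x)) = exp x * exp (-x * t) := by
  rw [← exp_add]
  ring_nf

theorem integrableOn_exp_neg_sub_one_mul {x : ℝ} (hx : 0 < x) :
    IntegrableOn (fun t => exp (-((t - 1) * x))) (Ioi 1) := by
  simp_rw [exp_neg_sub_one_mul]
  exact (integrableOn_exp_mul_Ioi (neg_neg_of_pos hx) 1).const_mul (exp x)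

theorem integral_exp_neg_sub_one_mul {x : ℝ} (hx : 0 < x) :
    ∫ t in Ioi (1 : ℝ), exp (-((t - 1) * x)) = x⁻¹ := by
  simp_rw [exp_neg_sub_one_mul]
  rw [integral_const_mul, integral_exp_mul_Ioi (neg_neg_of_pos hx), mul_one, neg_div_neg_eq,
    mul_div_assoc', ← exp_add, add_neg_cancel, exp_zero, one_div]

theorem integrableOn_exp_neg_sub_one_mul_div {x : ℝ} (hx : 0 < x) :
    IntegrableOn (fun t => exp (-((t - 1) * x)) / t) (Ioi 1) := by
  refine (integrableOn_exp_neg_sub_one_mul hx).mono'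
    (by fun_prop : Measurable fun t => exp (-((t - 1) * x)) / t).aestronglyMeasurable ?_
  filter_upwards [ae_restrict_mem measurableSet_Ioi] with t (ht : 1 < t)
  rw [norm_of_nonneg (by positivity)]
  exact div_le_self (exp_pos _).le ht.le

theorem expMulE1_strictAntiOn : StrictAntiOn expMulE1 (Ioi 0) := by
  intro a (ha : 0 < a) b (hb : 0 < b) hab
  refine setIntegral_lt_setIntegral_of_forall_lt measurableSet_Ioi (by simp)
    (integrableOn_exp_neg_sub_one_mul_div hb) (integrableOn_exp_neg_sub_one_mul_div ha)
    fun t (ht : 1 < t) => ?_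
  gcongr

theorem expMulE1_nonneg (x : ℝ) : 0 ≤ expMulE1 x :=
  setIntegral_nonneg measurableSet_Ioi fun t (ht : 1 < t) => by positivity

theorem expMulE1_le_inv {x : ℝ} (hx : 0 < x) : expMulE1 x ≤ x⁻¹ := by
  rw [← integral_exp_neg_sub_one_mul hx]
  exact setIntegral_mono_on (integrableOn_exp_neg_sub_one_mul_div hx)
    (integrableOn_exp_neg_sub_one_mul hx) measurableSet_Ioi
    fun t (ht : 1 < t) => div_le_self (exp_pos _).le ht.le

theorem exp_neg_one_mul_log_le_expMulE1 {x : ℝ} (hx : 0 < x) :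
    exp (-1) * log (1 + x⁻¹) ≤ expMulE1 x := by
  have hpos : 0 < x⁻¹ := inv_pos.2 hx
  calc exp (-1) * log (1 + x⁻¹)
      = ∫ t in Ioc 1 (1 + x⁻¹), exp (-1) / t := by
        simp_rw [div_eq_mul_inv]
        rw [integral_const_mul, ← intervalIntegral.integral_of_le (by linarith),
          integral_inv_of_pos one_pos (by linarith), div_one]
    _ ≤ ∫ t in Ioc 1 (1 + x⁻¹), exp (-((t - 1) * x)) / t := by
        refine setIntegral_mono_on ?_
          ((integrableOn_exp_neg_sub_one_mul_div hx).mono_set Ioc_subset_Ioi_self)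
          measurableSet_Ioc fun t ⟨ht1, ht⟩ => ?_
        · exact (continuousOn_const.div continuousOn_id fun t ht => by
            simp only [id]; linarith [ht.1]).integrableOn_Icc.mono_set Ioc_subset_Icc_self
        have : (t - 1) * x ≤ 1 := by
          calc (t - 1) * x ≤ x⁻¹ * x := by gcongr; linarith
            _ = 1 := inv_mul_cancel₀ hx.ne'
        gcongr
    _ ≤ expMulE1 x :=
        setIntegral_mono_set (integrableOn_exp_neg_sub_one_mul_div hx)
          (ae_restrict_of_forall_mem measurableSet_Ioi fun t (ht : 1 < t) => by positivity)
          Ioc_subset_Ioi_self.eventuallyLE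

theorem expMulE1_tendsto_nhdsGT_zero : Tendsto expMulE1 (nhdsWithin 0 (Ioi 0)) atTop := by
  have hlog : Tendsto (fun x : ℝ => exp (-1) * log (1 + x⁻¹)) (nhdsWithin 0 (Ioi 0)) atTop :=
    (tendsto_log_atTop.comp
      (tendsto_atTop_add_const_left _ 1 tendsto_inv_nhdsGT_zero)).const_mul_atTop (exp_pos _)
  refine tendsto_atTop_mono' _ ?_ hlog
  filter_upwards [self_mem_nhdsWithin] with x hx using exp_neg_one_mul_log_le_expMulE1 hx

theorem expMulE1_tendsto_atTop : Tendsto expMulE1 atTop (nhds 0) :=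
  tendsto_of_tendsto_of_tendsto_of_le_of_le' tendsto_const_nhds tendsto_inv_atTop_zero
    (Eventually.of_forall expMulE1_nonneg)
    (by filter_upwards [eventually_gt_atTop 0] with x hx using expMulE1_le_inv hx)

/-- Properties of `f(x) = eˣ E₁(x)` where `E₁(x) = ∫₁^∞ e^{−tx}/t dt`: `f` is strictly
decreasing on `(0, ∞)`, `f(x) → ∞` as `x → 0⁺`, and `f(x) → 0` as `x → ∞`. -/
theorem exp_expint_properties :
    let f : ℝ → ℝ := fun x =>
      Real.exp x * ∫ t in Set.Ioi (1:ℝ), Real.exp (-(t * x)) / t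
    StrictAntiOn f (Set.Ioi 0) ∧
    Tendsto f (nhdsWithin 0 (Set.Ioi 0)) atTop ∧
    Tendsto f atTop (nhds 0) := by
  intro f
  rw [show f = expMulE1 from funext exp_mul_integral_eq_expMulE1]
  exact ⟨expMulE1_strictAntiOn, expMulE1_tendsto_nhdsGT_zero, expMulE1_tendsto_atTop⟩
end

section
/- Let a > 0 and b > 0 be reals and let x_s, x_d ∈ ℝ² with ‖x_s − x_d‖ = 2d, d > 0. Then for every x ∈ ℝ², max(a·‖x_s − x‖, b·‖x − x_d‖) ≥ 2d·a·b/(a + b), and equality holds at the point x⋆ = (a·x_s + b·x_d)/(a + b), which lies on the segment joining x_s and x_d and satisfies a·‖x_s − x⋆‖ = b·‖x⋆ − x_d‖ and ‖x⋆ − x_d‖ = 2d·a/(a + b). Consequently the infimum over ℝ² of the heterogeneous relay selection function ŝ_diff(x) = max(a‖x_s − x‖, b‖x − x_d‖) equals 2d·a·b/(a + b). -/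
/-!
The maximum of `a u` and `b v` dominates their weighted mean with weights `b, a`, so
`(a + b) · max (a u) (b v) ≥ a b (u + v)`; with `u = ‖xs − x‖`, `v = ‖x − xd‖` the triangle
inequality gives `u + v ≥ ‖xs − xd‖`. At `x⋆ = (a xs + b xd)/(a + b)` the point lies on the
segment and `a ‖xs − x⋆‖ = b ‖x⋆ − xd‖ = ‖xs − xd‖ a b/(a + b)`, so the bound is attained.
-/

open Real

theorem mul_mul_add_div_le_max {a b u v : ℝ} (ha : 0 < a) (hb : 0 < b) :
    a * b * (u + v) / (a + b) ≤ max (a * u) (b * v) := by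
  rw [div_le_iff₀ (add_pos ha hb)]
  calc a * b * (u + v) = b * (a * u) + a * (b * v) := by ring
    _ ≤ b * max (a * u) (b * v) + a * max (a * u) (b * v) := by
        gcongr
        exacts [le_max_left _ _, le_max_right _ _]
    _ = max (a * u) (b * v) * (a + b) := by ring

theorem norm_sub_mul_mul_div_le_max {E : Type*} [SeminormedAddCommGroup E] {a b : ℝ}
    (ha : 0 < a) (hb : 0 < b) (x y z : E) :
    ‖x - y‖ * a * b / (a + b) ≤ max (a * ‖x - z‖) (b * ‖z - y‖) :=
  calc ‖x - y‖ * a * b / (a + b) = a * b * ‖x - y‖ / (a + b) := by ring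
    _ ≤ a * b * (‖x - z‖ + ‖z - y‖) / (a + b) := by
        gcongr
        exact norm_sub_le_norm_sub_add_norm_sub x z y
    _ ≤ max (a * ‖x - z‖) (b * ‖z - y‖) := mul_mul_add_div_le_max ha hb

section ConvexCombination

variable {E : Type*} [SeminormedAddCommGroup E] [NormedSpace ℝ E] {s t : ℝ}

theorem norm_sub_smul_add_smul (hst : s + t = 1) (ht : 0 ≤ t) (x y : E) :
    ‖x - (s • x + t • y)‖ = t * ‖x - y‖ := by
  obtain rfl : s = 1 - t := eq_sub_of_add_eq hst
  rw [show x - ((1 - t) • x + t • y) = t • (x - y) by module, norm_smul, norm_of_nonneg ht]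

theorem norm_smul_add_smul_sub (hst : s + t = 1) (hs : 0 ≤ s) (x y : E) :
    ‖s • x + t • y - y‖ = s * ‖x - y‖ := by
  obtain rfl : t = 1 - s := eq_sub_of_add_eq' hst
  rw [show s • x + (1 - s) • y - y = s • (x - y) by module, norm_smul, norm_of_nonneg hs]

end ConvexCombination

theorem heterogeneous_selection_infimum_general (a b d : ℝ) (ha : 0 < a) (hb : 0 < b)
    (xs xd xstar : EuclideanSpace ℝ (Fin 2)) (hdist : ‖xs - xd‖ = 2 * d)
    (hxstar : xstar = (a / (a + b)) • xs + (b / (a + b)) • xd) :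
    (∀ x : EuclideanSpace ℝ (Fin 2),
        2 * d * a * b / (a + b) ≤ max (a * ‖xs - x‖) (b * ‖x - xd‖)) ∧
    max (a * ‖xs - xstar‖) (b * ‖xstar - xd‖) = 2 * d * a * b / (a + b) ∧
    a * ‖xs - xstar‖ = b * ‖xstar - xd‖ ∧
    ‖xstar - xd‖ = 2 * d * a / (a + b) ∧
    xstar ∈ segment ℝ xs xd ∧
    IsGLB (Set.range fun x : EuclideanSpace ℝ (Fin 2) =>
        max (a * ‖xs - x‖) (b * ‖x - xd‖)) (2 * d * a * b / (a + b)) := by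
  rw [← hdist]
  have hweights : a / (a + b) + b / (a + b) = 1 := by field_simp
  have hlower := norm_sub_mul_mul_div_le_max (x := xs) (y := xd) ha hb
  have hleft : a * ‖xs - xstar‖ = ‖xs - xd‖ * a * b / (a + b) := by
    rw [hxstar, norm_sub_smul_add_smul hweights (by positivity)]; ring
  have hright : ‖xstar - xd‖ = ‖xs - xd‖ * a / (a + b) := by
    rw [hxstar, norm_smul_add_smul_sub hweights (by positivity)]; ring
  have hbalanced : a * ‖xs - xstar‖ = b * ‖xstar - xd‖ := by rw [hleft, hright]; ring
  have hattained : max (a * ‖xs - xstar‖) (b * ‖xstar - xd‖) = ‖xs - xd‖ * a * b / (a + b) := by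
    rw [← hbalanced, max_self, hleft]
  refine ⟨hlower, hattained, hbalanced, hright,
    ⟨_, _, by positivity, by positivity, hweights, hxstar.symm⟩,
    IsLeast.isGLB ⟨⟨xstar, hattained⟩, ?_⟩⟩
  rintro _ ⟨x, rfl⟩
  exact hlower x

/-- Heterogeneous relay selection function `ŝ_diff(x) = max (a‖xs − x‖) (b‖x − xd‖)` with
`a, b > 0` and `‖xs − xd‖ = 2d`: for every `x`,
`ŝ_diff(x) ≥ 2dab/(a+b)`, with equality at `x⋆ = (a xs + b xd)/(a+b)`, which lies on the
segment joining `xs` and `xd` and satisfies `a‖xs − x⋆‖ = b‖x⋆ − xd‖` and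
`‖x⋆ − xd‖ = 2da/(a+b)`; consequently the infimum of `ŝ_diff` over `ℝ²` equals
`2dab/(a+b)`. -/
theorem heterogeneous_selection_infimum (a b d : ℝ) (ha : 0 < a) (hb : 0 < b) (hd : 0 < d)
    (xs xd xstar : EuclideanSpace ℝ (Fin 2)) (hdist : ‖xs - xd‖ = 2 * d)
    (hxstar : xstar = (a / (a + b)) • xs + (b / (a + b)) • xd) :
    (∀ x : EuclideanSpace ℝ (Fin 2),
        2 * d * a * b / (a + b) ≤ max (a * ‖xs - x‖) (b * ‖x - xd‖)) ∧
    max (a * ‖xs - xstar‖) (b * ‖xstar - xd‖) = 2 * d * a * b / (a + b) ∧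
    a * ‖xs - xstar‖ = b * ‖xstar - xd‖ ∧
    ‖xstar - xd‖ = 2 * d * a / (a + b) ∧
    xstar ∈ segment ℝ xs xd ∧
    IsGLB (Set.range fun x : EuclideanSpace ℝ (Fin 2) =>
        max (a * ‖xs - x‖) (b * ‖x - xd‖)) (2 * d * a * b / (a + b)) :=
  heterogeneous_selection_infimum_general a b d ha hb xs xd xstar hdist hxstar
end
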